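/- Define a bracket on the space g of real-valued functions on bicoloured rooted trees by [α,β](u) = ∑_{j=1}^{|u|−1} (α(u_{(j)})β(u^{(j)}) − α(u^{(j)})β(u_{(j)})), where the pairs (u_{(j)}, u^{(j)}) range over the splittings of u obtained by removing one edge (u_{(j)} containing the root). This bracket is bilinear, antisymmetric, and satisfies the Jacobi identity, making g a Lie algebra. -/

import Mathlib

/-!
The bracket is the commutator of the product `(α ⋆ β)(u) = ∑_j α(u_{(j)}) β(u^{(j)})`, so it
suffices that `⋆` is right pre-Lie. Evaluated at `u`, both `(α ⋆ β) ⋆ γ` and `α ⋆ (β ⋆ γ)` are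
sums over ordered pairs of edges of `u` removed one after the other. The pairs where the second
edge lies below the first occur in both, and cancel in the associator; what remains are the
pairs of incomparable edges, which come in both orders, so the associator is symmetric in
`β` and `γ`.
-/

/-- Bicoloured (planar) rooted trees: a tree is either a single coloured vertex
(`leaf c`, with `c = true` for black and `c = false` for white), or `graft v w`,
the tree obtained from `v` by attaching `w` as a further child of the root of
`v` (the root of `graft v w` is the root of `v`). -/
inductive BTree : Type
  | leaf : Bool → BTree
  | graft : BTree → BTree → BTree
deriving DecidableEq

/-- The multiset of splittings of a tree `u`: for each edge of `u`, removing it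
yields the ordered pair `(root component, non-root component)` (the root
component keeps the original root; the other component is rooted at the
endpoint of the removed edge). -/
def BTree.splits : BTree → Multiset (BTree × BTree)
  | .leaf _ => 0
  | .graft v w =>
      (v, w) ::ₘ
        ((BTree.splits v).map (fun p => (p.1.graft w, p.2))
          + (BTree.splits w).map (fun p => (v.graft p.1, p.2)))

/-- The bracket `[α,β](u) = ∑_j (α(u_{(j)})β(u^{(j)}) − α(u^{(j)})β(u_{(j)}))`
on real-valued maps on bicoloured rooted trees, the sum running over the
edge-removal splittings `(u_{(j)}, u^{(j)})` of `u`. -/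
def treeBracket (α β : BTree → ℝ) (u : BTree) : ℝ :=
  ((BTree.splits u).map (fun p => α p.1 * β p.2 - α p.2 * β p.1)).sum

namespace BTree

def resplitsBranch (u : BTree) : Multiset (BTree × BTree × BTree) :=
  u.splits.bind fun p => p.2.splits.map fun q => (p.1, q.1, q.2)

def resplitsRoot (u : BTree) : Multiset (BTree × BTree × BTree) :=
  u.splits.bind fun p => p.1.splits.map fun q => (q.1, q.2, p.2)

/-- Triples `(r, b₁, b₂)` where `b₁` and `b₂` are the branches cut off by two incomparable edges,
the edge of `b₁` lying to the left of that of `b₂`. -/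
def incomparableSplits : BTree → Multiset (BTree × BTree × BTree)
  | .leaf _ => 0
  | .graft v w =>
      (incomparableSplits v).map (fun t => (t.1.graft w, t.2))
        + (incomparableSplits w).map (fun t => (v.graft t.1, t.2))
        + v.splits.map (fun q => (q.1, q.2, w))
        + v.splits.bind fun q => w.splits.map fun r => (q.1.graft r.1, q.2, r.2)

lemma resplitsBranch_graft (v w : BTree) :
    (v.graft w).resplitsBranch
      = w.splits.map (fun q => (v, q.1, q.2))
        + v.resplitsBranch.map (fun t => (t.1.graft w, t.2))
        + w.resplitsBranch.map (fun t => (v.graft t.1, t.2)) := by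
  simp only [resplitsBranch, splits, Multiset.cons_bind, Multiset.add_bind,
    Multiset.map_bind, Multiset.map_map, Multiset.bind_map, add_assoc]
  rfl

lemma resplitsRoot_graft (v w : BTree) :
    (v.graft w).resplitsRoot
      = v.splits.map (fun q => (q.1, q.2, w))
        + v.splits.map (fun q => (q.1, w, q.2))
        + v.resplitsRoot.map (fun t => (t.1.graft w, t.2))
        + (v.splits.bind fun q => w.splits.map fun r => (q.1.graft r.1, r.2, q.2))
        + w.splits.map (fun r => (v, r.1, r.2))
        + (v.splits.bind fun q => w.splits.map fun r => (q.1.graft r.1, q.2, r.2))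
        + w.resplitsRoot.map (fun t => (v.graft t.1, t.2)) := by
  simp only [resplitsRoot, splits, Multiset.cons_bind, Multiset.add_bind,
    Multiset.map_bind, Multiset.map_map, Multiset.bind_map, Multiset.map_cons, Multiset.map_add,
    Multiset.bind_cons, Multiset.bind_add, Function.comp_def]
  rw [Multiset.bind_map_comm w.splits v.splits]
  abel

lemma resplitsRoot_eq (u : BTree) :
    u.resplitsRoot
      = u.resplitsBranch + u.incomparableSplits
        + u.incomparableSplits.map fun t => (t.1, t.2.2, t.2.1) := by
  induction u with
  | leaf c => simp [resplitsRoot, resplitsBranch, incomparableSplits, splits]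
  | graft v w ihv ihw =>
    rw [resplitsRoot_graft, resplitsBranch_graft, ihv, ihw]
    simp only [incomparableSplits, Multiset.map_add, Multiset.map_map,
      Multiset.map_bind, Function.comp_def]
    abel

end BTree

def treeProduct (α β : BTree → ℝ) (u : BTree) : ℝ :=
  (u.splits.map fun p => α p.1 * β p.2).sum

lemma treeProduct_treeProduct_left (α β γ : BTree → ℝ) (u : BTree) :
    treeProduct (treeProduct α β) γ u
      = (u.resplitsRoot.map fun t => α t.1 * β t.2.1 * γ t.2.2).sum := by
  simp only [treeProduct, BTree.resplitsRoot, Multiset.map_bind, Multiset.sum_bind,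
    Multiset.map_map, Function.comp_def, ← Multiset.sum_map_mul_right]

lemma treeProduct_treeProduct_right (α β γ : BTree → ℝ) (u : BTree) :
    treeProduct α (treeProduct β γ) u
      = (u.resplitsBranch.map fun t => α t.1 * β t.2.1 * γ t.2.2).sum := by
  simp only [treeProduct, BTree.resplitsBranch, Multiset.map_bind, Multiset.sum_bind,
    Multiset.map_map, Function.comp_def, ← Multiset.sum_map_mul_left, mul_assoc]

lemma treeProduct_associator_eq (α β γ : BTree → ℝ) (u : BTree) :
    treeProduct (treeProduct α β) γ u - treeProduct α (treeProduct β γ) u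
      = (u.incomparableSplits.map fun t => α t.1 * β t.2.1 * γ t.2.2).sum
        + (u.incomparableSplits.map fun t => α t.1 * γ t.2.1 * β t.2.2).sum := by
  rw [treeProduct_treeProduct_left, treeProduct_treeProduct_right, BTree.resplitsRoot_eq]
  simp only [Multiset.map_add, Multiset.sum_add, Multiset.map_map, Function.comp_def,
    mul_right_comm _ (β _)]
  ring

/-- The space `g`, as a type synonym so that its multiplication can be `treeProduct`
rather than the pointwise one. -/
def TreeFun : Type := BTree → ℝ

namespace TreeFun

instance : AddCommGroup TreeFun := Pi.addCommGroup

instance : Module ℝ TreeFun := Pi.module _ _ _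

instance : Mul TreeFun := ⟨treeProduct⟩

section apply

variable (α β : TreeFun) (a : ℝ) (u : BTree)

lemma zero_apply : (0 : TreeFun) u = 0 := rfl
lemma add_apply : (α + β) u = α u + β u := rfl
lemma smul_apply : (a • α) u = a * α u := rfl
lemma mul_apply : (α * β) u = treeProduct α β u := rfl

end apply

instance : NonUnitalNonAssocRing TreeFun where
  left_distrib α β γ := funext fun u => by
    simp only [mul_apply, add_apply, treeProduct, mul_add, Multiset.sum_map_add]
  right_distrib α β γ := funext fun u => by
    simp only [mul_apply, add_apply, treeProduct, add_mul, Multiset.sum_map_add]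
  zero_mul α := funext fun u => by simp [mul_apply, zero_apply, treeProduct]
  mul_zero α := funext fun u => by simp [mul_apply, zero_apply, treeProduct]

instance : RightPreLieRing TreeFun where
  assoc_symm' α β γ := funext fun u => by
    rw [associator_apply, associator_apply]
    exact (treeProduct_associator_eq α β γ u).trans
      ((add_comm _ _).trans (treeProduct_associator_eq α γ β u).symm)

instance : RightPreLieAlgebra ℝ TreeFun where
  smul_assoc a α β := funext fun u => by
    simp only [smul_eq_mul, mul_apply, smul_apply, treeProduct, mul_assoc,
      Multiset.sum_map_mul_left]
  smul_comm a α β := funext fun u => by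
    simp only [smul_eq_mul, mul_apply, smul_apply, treeProduct, mul_left_comm _ a,
      Multiset.sum_map_mul_left]

lemma lie_eq_treeBracket (α β : TreeFun) : ⁅α, β⁆ = (treeBracket α β : TreeFun) := by
  funext u
  show treeProduct α β u - treeProduct β α u = treeBracket α β u
  unfold treeBracket
  rw [Multiset.sum_map_sub]
  simp only [treeProduct, mul_comm (β _)]

end TreeFun

/-- the bracket is bilinear, antisymmetric and satisfies the
Jacobi identity, making the space of real-valued maps on bicoloured rooted
trees a Lie algebra. -/
theorem treeBracket_lie_algebra :
    (∀ (a b : ℝ) (α α' β : BTree → ℝ),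
        treeBracket (fun u => a * α u + b * α' u) β
          = fun u => a * treeBracket α β u + b * treeBracket α' β u)
    ∧ (∀ (a b : ℝ) (α β β' : BTree → ℝ),
        treeBracket α (fun u => a * β u + b * β' u)
          = fun u => a * treeBracket α β u + b * treeBracket α β' u)
    ∧ (∀ α β : BTree → ℝ, treeBracket α β = fun u => -treeBracket β α u)
    ∧ (∀ (α β γ : BTree → ℝ) (u : BTree),
        treeBracket α (treeBracket β γ) u + treeBracket β (treeBracket γ α) u
          + treeBracket γ (treeBracket α β) u = 0) := by
  refine ⟨fun a b (α α' β : TreeFun) => ?_, fun a b (α β β' : TreeFun) => ?_,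
    fun (α β : TreeFun) => ?_, fun (α β γ : TreeFun) u => ?_⟩
  · show @Eq TreeFun (treeBracket (a • α + b • α') β)
      (a • treeBracket α β + b • treeBracket α' β)
    simp only [← TreeFun.lie_eq_treeBracket, add_lie, smul_lie]
    rfl
  · show @Eq TreeFun (treeBracket α (a • β + b • β'))
      (a • treeBracket α β + b • treeBracket α β')
    simp only [← TreeFun.lie_eq_treeBracket, lie_add, lie_smul]
    rfl
  · show @Eq TreeFun (treeBracket α β) (-treeBracket β α)
    simp only [← TreeFun.lie_eq_treeBracket]
    exact (lie_skew α β).symm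
  · show (treeBracket α (treeBracket β γ) + treeBracket β (treeBracket γ α)
      + treeBracket γ (treeBracket α β) : TreeFun) u = 0
    simp only [← TreeFun.lie_eq_treeBracket]
    exact congrFun (lie_jacobi α β γ) u
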